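/- arXiv:0904.1361 — 2 statements merged into one kernel-verified Lean document; each statement's English description precedes it below -/
import Mathlib

section
/- Fix ω > 0 and φ > 0. As ν → ∞, the mode of the GIG(ω,φ,ν) distribution is asymptotically equal to its mean: lim_{ν→∞} [√(φ/ω) · K_{ν+2}(2√(ωφ))/K_{ν+1}(2√(ωφ))] · 2ω/(ν + √(ν² + 4ωφ)) = 1. -/
/-!
Integrating by parts the derivative of `u ^ ν * exp (-z (u + 1/u) / 2)` over `(0, ∞)` gives the
recurrence `z K_{ν+1}(z) = 2ν K_ν(z) + z K_{ν-1}(z)`. For `R_ν = K_{ν+1}/K_ν` it reads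
`z R_ν = 2ν + z / R_{ν-1}`, whence `2ν < z R_ν < 2ν + z² / (2(ν-1))` and `z R_ν = 2ν + o(1)`.
With `z = 2√(ωφ)` we have `√(φ/ω) · 2ω = z` and `4ωφ = z²`, so the quantity in question is
`z R_{ν+1} / (ν + √(ν² + z²))`, a quotient of two functions asymptotic to `2ν`.
-/

open MeasureTheory ProbabilityTheory Filter

/-- Modified Bessel function of the third kind:
`K_ν(z) = (1/2) ∫₀^∞ u^(ν-1) exp(-z(u+1/u)/2) du`. -/
noncomputable def besselK (ν z : ℝ) : ℝ :=
  (1 / 2) * ∫ u in Set.Ioi (0 : ℝ), u ^ (ν - 1) * Real.exp (-(z * (u + 1 / u)) / 2)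

/-- The ratio `R_ν(z) = K_{ν+1}(z) / K_ν(z)`. -/
noncomputable def besselR (ν z : ℝ) : ℝ := besselK (ν + 1) z / besselK ν z

open Set Real Topology Asymptotics

lemma exp_neg_le_factorial_div_pow {t : ℝ} (ht : 0 < t) (n : ℕ) :
    exp (-t) ≤ n.factorial / t ^ n := by
  rw [exp_neg, inv_le_comm₀ (exp_pos t) (by positivity), inv_div]
  exact Real.pow_div_factorial_le_exp _ ht.le n

lemma hasDerivAt_exp_neg_mul_add_inv_div_two (z : ℝ) {u : ℝ} (hu : 0 < u) :
    HasDerivAt (fun u => exp (-(z * (u + 1 / u)) / 2))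
      (exp (-(z * (u + 1 / u)) / 2) * (z / 2 * (u ^ 2)⁻¹ - z / 2)) u := by
  have hsum : HasDerivAt (fun u : ℝ => u + 1 / u) (1 - (u ^ 2)⁻¹) u := by
    simpa [one_div, sub_eq_add_neg] using (hasDerivAt_id' u).fun_add (hasDerivAt_inv hu.ne')
  exact ((hsum.const_mul z).fun_neg.div_const 2).exp.congr_deriv (by ring)

lemma Asymptotics.isEquivalent_of_tendsto_sub {α β : Type*} [NormedAddCommGroup β] {l : Filter α}
    {u v : α → β} {c : β} (huv : Tendsto (u - v) l (𝓝 c)) (hv : Tendsto (fun x => ‖v x‖) l atTop) :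
    u ~[l] v :=
  (huv.isBigO_one ℝ).trans_isLittleO (isLittleO_const_left.2 (Or.inr hv))

lemma tendsto_sqrt_sq_add_sub_atTop (c : ℝ) :
    Tendsto (fun x => √(x ^ 2 + c) - x) atTop (𝓝 0) := by
  have hden : Tendsto (fun x => √(x ^ 2 + c) + x) atTop atTop :=
    tendsto_atTop_mono' _ (Eventually.of_forall fun x => le_add_of_nonneg_left (sqrt_nonneg _))
      tendsto_id
  refine ((tendsto_const_nhds (x := c)).div_atTop hden).congr' ?_
  filter_upwards [eventually_ge_atTop (|c| + 1)] with x hx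
  have hc : 0 ≤ x ^ 2 + c := by nlinarith [neg_abs_le c, abs_nonneg c]
  have hpos : 0 < √(x ^ 2 + c) + x :=
    add_pos_of_nonneg_of_pos (sqrt_nonneg _) (by linarith [abs_nonneg c])
  rw [div_eq_iff hpos.ne']
  ring_nf
  rw [sq_sqrt hc]
  ring

noncomputable def besselKIntegrand (ν z u : ℝ) : ℝ := u ^ (ν - 1) * exp (-(z * (u + 1 / u)) / 2)

lemma integral_besselKIntegrand (ν z : ℝ) :
    ∫ u in Ioi 0, besselKIntegrand ν z u = 2 * besselK ν z := by
  rw [besselK]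
  simp only [besselKIntegrand]
  ring

section BesselK

variable {z : ℝ}

lemma besselKIntegrand_pos (ν : ℝ) {u : ℝ} (hu : 0 < u) : 0 < besselKIntegrand ν z u := by
  unfold besselKIntegrand; positivity

lemma continuousOn_besselKIntegrand (ν z : ℝ) : ContinuousOn (besselKIntegrand ν z) (Ioi 0) := by
  have hne : ∀ u ∈ Ioi (0 : ℝ), u ≠ 0 := fun u hu => ne_of_gt hu
  unfold besselKIntegrand
  exact (continuousOn_id.rpow_const fun u hu => Or.inl (hne u hu)).mul
    (by fun_prop (disch := assumption))

lemma besselKIntegrand_eq_mul (ν z : ℝ) {u : ℝ} (hu : 0 < u) :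
    besselKIntegrand ν z u = u ^ (ν - 1) * exp (-(z / 2) * u) * exp (-(z / 2) * u⁻¹) := by
  rw [besselKIntegrand, mul_assoc, ← exp_add]
  congr 2
  field_simp
  ring

/-- Trading `exp (-z / (2u))` for a power of `u` removes the singularity at `0`, which reduces
integrability of the integrand, for every order `ν`, to that of a Gamma integrand. -/
lemma besselKIntegrand_le_mul_exp_neg (hz : 0 < z) (ν : ℝ) (n : ℕ) {u : ℝ} (hu : 0 < u) :
    besselKIntegrand ν z u ≤
      n.factorial * (2 / z) ^ n * (u ^ (ν - 1 + n) * exp (-(z / 2) * u)) := by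
  have hexp := exp_neg_le_factorial_div_pow (show 0 < z / 2 * u⁻¹ by positivity) n
  rw [besselKIntegrand_eq_mul ν z hu, rpow_add hu, rpow_natCast, neg_mul (z / 2) u⁻¹]
  calc u ^ (ν - 1) * exp (-(z / 2) * u) * exp (-(z / 2 * u⁻¹))
      ≤ u ^ (ν - 1) * exp (-(z / 2) * u) * (n.factorial / (z / 2 * u⁻¹) ^ n) := by gcongr
    _ = _ := by
        rw [show z / 2 * u⁻¹ = (2 / z * u)⁻¹ by field_simp, inv_pow, div_inv_eq_mul, mul_pow]
        ring

lemma integrableOn_besselKIntegrand (hz : 0 < z) (ν : ℝ) :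
    IntegrableOn (besselKIntegrand ν z) (Ioi 0) := by
  obtain ⟨n, hn⟩ : ∃ n : ℕ, -ν < n := exists_nat_gt (-ν)
  have hgamma : IntegrableOn (fun u => u ^ (ν - 1 + n) * exp (-(z / 2) * u)) (Ioi 0) := by
    simpa only [rpow_one] using
      integrableOn_rpow_mul_exp_neg_mul_rpow (p := 1) (by linarith) one_pos (half_pos hz)
  have hdom := hgamma.const_mul (n.factorial * (2 / z) ^ n)
  refine hdom.mono' ((continuousOn_besselKIntegrand ν z).aestronglyMeasurable measurableSet_Ioi) ?_
  filter_upwards [ae_restrict_mem measurableSet_Ioi] with u hu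
  rw [Real.norm_of_nonneg (besselKIntegrand_pos ν hu).le]
  exact besselKIntegrand_le_mul_exp_neg hz ν n hu

lemma besselK_pos (hz : 0 < z) (ν : ℝ) : 0 < besselK ν z := by
  have hpos : ∀ u ∈ Ioi (0 : ℝ), 0 < besselKIntegrand ν z u := fun u hu => besselKIntegrand_pos ν hu
  have hsupp : Function.support (besselKIntegrand ν z) ∩ Ioi 0 = Ioi 0 :=
    inter_eq_right.2 fun u hu => (hpos u hu).ne'
  have hint : 0 < ∫ u in Ioi 0, besselKIntegrand ν z u := by
    refine (setIntegral_pos_iff_support_of_nonneg_ae ?_ (integrableOn_besselKIntegrand hz ν)).2 ?_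
    · filter_upwards [ae_restrict_mem measurableSet_Ioi] with u hu using (hpos u hu).le
    · simp [hsupp]
  rw [integral_besselKIntegrand] at hint
  linarith

lemma tendsto_besselKIntegrand_nhdsGT_zero (hz : 0 < z) (ν : ℝ) :
    Tendsto (besselKIntegrand ν z) (𝓝[>] 0) (𝓝 0) := by
  have hinv : Tendsto (fun u : ℝ => u⁻¹ ^ (1 - ν) * exp (-(z / 2) * u⁻¹)) (𝓝[>] 0) (𝓝 0) :=
    (tendsto_rpow_mul_exp_neg_mul_atTop_nhds_zero _ _ (half_pos hz)).comp tendsto_inv_nhdsGT_zero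
  refine squeeze_zero' ?_ ?_ hinv
  · filter_upwards [self_mem_nhdsWithin] with u hu using (besselKIntegrand_pos ν hu).le
  · filter_upwards [self_mem_nhdsWithin] with u (hu : 0 < u)
    rw [besselKIntegrand_eq_mul ν z hu, inv_rpow hu.le, ← rpow_neg hu.le, neg_sub,
      mul_right_comm]
    refine mul_le_of_le_one_right (by positivity) (exp_le_one_iff.2 ?_)
    nlinarith

lemma tendsto_besselKIntegrand_atTop (hz : 0 < z) (ν : ℝ) :
    Tendsto (besselKIntegrand ν z) atTop (𝓝 0) := by
  refine squeeze_zero' ?_ ?_ (tendsto_rpow_mul_exp_neg_mul_atTop_nhds_zero (ν - 1) _ (half_pos hz))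
  · filter_upwards [eventually_gt_atTop (0 : ℝ)] with u hu using (besselKIntegrand_pos ν hu).le
  · filter_upwards [eventually_gt_atTop (0 : ℝ)] with u hu
    rw [besselKIntegrand_eq_mul ν z hu]
    refine mul_le_of_le_one_right (by positivity) (exp_le_one_iff.2 ?_)
    have : 0 < u⁻¹ := inv_pos.2 hu
    nlinarith

lemma besselK_add_one (hz : 0 < z) (ν : ℝ) :
    z * besselK (ν + 1) z = 2 * ν * besselK ν z + z * besselK (ν - 1) z := by
  set E : ℝ → ℝ := fun u => exp (-(z * (u + 1 / u)) / 2) with hE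
  have hpow : ∀ u ∈ Ioi (0 : ℝ), HasDerivAt (fun u => u ^ ν) (ν * u ^ (ν - 1)) u :=
    fun u hu => hasDerivAt_rpow_const (Or.inl (ne_of_gt hu))
  have hE_deriv : ∀ u ∈ Ioi (0 : ℝ), HasDerivAt E (E u * (z / 2 * (u ^ 2)⁻¹ - z / 2)) u :=
    fun u hu => hasDerivAt_exp_neg_mul_add_inv_div_two z hu
  have hprod : (fun u => u ^ ν) * E = besselKIntegrand (ν + 1) z := by
    ext u; simp [besselKIntegrand, hE]
  have hcomb : EqOn (fun u => ν * u ^ (ν - 1) * E u + u ^ ν * (E u * (z / 2 * (u ^ 2)⁻¹ - z / 2)))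
      (fun u => ν * besselKIntegrand ν z u - z / 2 * besselKIntegrand (ν + 1) z u
        + z / 2 * besselKIntegrand (ν - 1) z u) (Ioi 0) := by
    intro u (hu : 0 < u)
    simp only [besselKIntegrand, add_sub_cancel_right]
    rw [show ν - 1 - 1 = ν + -2 by ring, rpow_add hu, rpow_neg hu.le, rpow_two]
    ring
  have i₁ := (integrableOn_besselKIntegrand hz ν).const_mul ν
  have i₂ := (integrableOn_besselKIntegrand hz (ν + 1)).const_mul (z / 2)
  have i₃ := (integrableOn_besselKIntegrand hz (ν - 1)).const_mul (z / 2)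
  have i₁₂ : IntegrableOn (fun u => ν * besselKIntegrand ν z u
      - z / 2 * besselKIntegrand (ν + 1) z u) (Ioi 0) := i₁.sub i₂
  have hint : IntegrableOn (fun u => ν * besselKIntegrand ν z u
      - z / 2 * besselKIntegrand (ν + 1) z u + z / 2 * besselKIntegrand (ν - 1) z u) (Ioi 0) :=
    i₁₂.add i₃
  have hibp := integral_Ioi_deriv_mul_eq_sub hpow hE_deriv
    (hint.congr_fun hcomb.symm measurableSet_Ioi)
    (by rw [hprod]; exact tendsto_besselKIntegrand_nhdsGT_zero hz _)
    (by rw [hprod]; exact tendsto_besselKIntegrand_atTop hz _)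
  rw [setIntegral_congr_fun measurableSet_Ioi hcomb, integral_add i₁₂ i₃, integral_sub i₁ i₂,
    integral_const_mul, integral_const_mul, integral_const_mul, integral_besselKIntegrand,
    integral_besselKIntegrand, integral_besselKIntegrand] at hibp
  linarith

end BesselK

section BesselR

variable {z : ℝ}

lemma besselR_pos (hz : 0 < z) (ν : ℝ) : 0 < besselR ν z :=
  div_pos (besselK_pos hz _) (besselK_pos hz _)

lemma mul_besselR_eq_two_mul_add_div (hz : 0 < z) (ν : ℝ) :
    z * besselR ν z = 2 * ν + z / besselR (ν - 1) z := by
  have hK := besselK_pos hz ν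
  have hK' := besselK_pos hz (ν - 1)
  rw [besselR, besselR, sub_add_cancel]
  field_simp
  linarith [besselK_add_one hz ν]

lemma two_mul_lt_mul_besselR (hz : 0 < z) (ν : ℝ) : 2 * ν < z * besselR ν z := by
  rw [mul_besselR_eq_two_mul_add_div hz]
  linarith [div_pos hz (besselR_pos hz (ν - 1))]

lemma tendsto_mul_besselR_sub_two_mul (hz : 0 < z) :
    Tendsto (fun ν => z * besselR ν z - 2 * ν) atTop (𝓝 0) := by
  have hbound : Tendsto (fun ν => z ^ 2 / (2 * (ν - 1))) atTop (𝓝 0) :=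
    tendsto_const_nhds.div_atTop
      ((tendsto_atTop_add_const_right _ _ tendsto_id).const_mul_atTop two_pos)
  refine squeeze_zero' ?_ ?_ hbound
  · exact Eventually.of_forall fun ν => (sub_pos.2 (two_mul_lt_mul_besselR hz ν)).le
  · filter_upwards [eventually_gt_atTop 1] with ν hν
    have hlt := two_mul_lt_mul_besselR hz (ν - 1)
    have hR := besselR_pos hz (ν - 1)
    calc z * besselR ν z - 2 * ν = z ^ 2 / (z * besselR (ν - 1) z) := by
          rw [mul_besselR_eq_two_mul_add_div hz]; field_simp; ring
      _ ≤ z ^ 2 / (2 * (ν - 1)) := by gcongr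

end BesselR

/-- **mode ∼ mean for the GIG as ν → ∞.**
For fixed `ω, φ > 0`, the mean `√(φ/ω) K_{ν+2}(2√(ωφ))/K_{ν+1}(2√(ωφ))` of GIG(ω,φ,ν)
is asymptotically equal to its mode `(ν + √(ν² + 4ωφ))/(2ω)` as `ν → ∞`. -/
theorem GIG_mode_asymptotically_mean (ω φ : ℝ) (hω : 0 < ω) (hφ : 0 < φ) :
    Tendsto (fun ν : ℝ =>
        (Real.sqrt (φ / ω) *
            (besselK (ν + 2) (2 * Real.sqrt (ω * φ)) /
              besselK (ν + 1) (2 * Real.sqrt (ω * φ)))) *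
          (2 * ω / (ν + Real.sqrt (ν ^ 2 + 4 * ω * φ))))
      atTop (nhds 1) := by
  set z := 2 * √(ω * φ) with hz_def
  have hz : 0 < z := by positivity
  have hcoef : √(φ / ω) * (2 * ω) = z := by
    have hsq : φ / ω * ω ^ 2 = ω * φ := by field_simp
    rw [hz_def, ← hsq, sqrt_mul (by positivity), sqrt_sq hω.le]
    ring
  have h2ν : Tendsto (fun ν : ℝ => ‖2 * ν‖) atTop atTop :=
    tendsto_norm_atTop_atTop.comp (tendsto_id.const_mul_atTop two_pos)
  have hnum : (fun ν => z * besselR (ν + 1) z) ~[atTop] fun ν => 2 * ν := by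
    refine isEquivalent_of_tendsto_sub (c := 0 + 2) (Tendsto.congr (fun ν => ?_) <|
      ((tendsto_mul_besselR_sub_two_mul hz).comp
        (tendsto_atTop_add_const_right _ 1 tendsto_id)).add_const 2) h2ν
    simp only [Function.comp_apply, Pi.sub_apply, id]
    ring
  have hden : (fun ν => ν + √(ν ^ 2 + 4 * ω * φ)) ~[atTop] fun ν => 2 * ν := by
    refine isEquivalent_of_tendsto_sub
      (Tendsto.congr (fun ν => ?_) (tendsto_sqrt_sq_add_sub_atTop (4 * ω * φ))) h2ν
    simp only [Pi.sub_apply]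
    ring
  have hden_ne : ∀ᶠ ν in atTop, ν + √(ν ^ 2 + 4 * ω * φ) ≠ 0 := by
    filter_upwards [eventually_gt_atTop 0] with ν hν
    positivity
  refine ((isEquivalent_iff_tendsto_one hden_ne).1 (hnum.trans hden.symm)).congr fun ν => ?_
  rw [Pi.div_apply, besselR, ← hcoef, show ν + 1 + 1 = ν + 2 by ring]
  ring
end

section
/- Fix α₀ > 0, β₀ > 0, L > 0, integers K ≥ 1 and M ≥ 1, losses x₁,…,x_K with x_k > L for all k, and θ̄ > 0. Set ω = 1/β₀ + Σ_{k=1}^K log(x_k/L) and let g = K/Σ_{k=1}^K log(x_k/L) be the maximum likelihood estimator of the tail index. Then lim_{ξ→0⁺} √(ξMθ̄/ω) · R_{α₀ − Mξ + K}(2√(ω ξ M θ̄)) = (α₀ + K)/ω, and this limit equals the credibility mixture (1 − Kβ₀/(g + Kβ₀))·α₀β₀ + (Kβ₀/(g + Kβ₀))·g of the prior mean α₀β₀ and the maximum likelihood estimator g. -/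
/-!
Substituting `u = t / a` turns `K_ν(2a)` into `a^(-ν)/2 · Γ(ν; a²)`, where
`Γ(ν; c) = ∫₀^∞ t^(ν-1) e^(-t - c/t) dt` is the extended gamma function. Hence
`√(φ/ω) R_ν(2√(ωφ)) = ω⁻¹ Γ(ν+1; ωφ) / Γ(ν; ωφ)`. As `ξ → 0⁺` we have `φ = ξMθ̄ → 0` and
`ν → α₀ + K`; by dominated convergence `Γ(ν; c) → Γ(ν₀)` jointly, so the posterior mean tends
to `Γ(α₀+K+1) / (ω Γ(α₀+K)) = (α₀+K)/ω`. The credibility form of this limit is algebra.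
-/

open MeasureTheory ProbabilityTheory Filter

open Set Real Topology

noncomputable def extendedGamma (ν c : ℝ) : ℝ :=
  ∫ t in Ioi (0 : ℝ), t ^ (ν - 1) * exp (-t - c / t)

lemma extendedGamma_zero {ν : ℝ} (hν : 0 < ν) : extendedGamma ν 0 = Gamma ν := by
  rw [Gamma_eq_integral hν, extendedGamma]
  simp only [zero_div, sub_zero, mul_comm]

lemma besselK_two_mul (ν : ℝ) {a : ℝ} (ha : 0 < a) :
    besselK ν (2 * a) = a ^ (-ν) / 2 * extendedGamma ν (a ^ 2) := by
  set f : ℝ → ℝ := fun u => u ^ (ν - 1) * exp (-(2 * a * (u + 1 / u)) / 2)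
  have hf : ∀ t ∈ Ioi (0 : ℝ),
      f (a⁻¹ * t) = a ^ (1 - ν) * (t ^ (ν - 1) * exp (-t - a ^ 2 / t)) := by
    intro t (ht : 0 < t)
    have hpow : (a⁻¹ * t) ^ (ν - 1) = a ^ (1 - ν) * t ^ (ν - 1) := by
      rw [mul_rpow (inv_nonneg.mpr ha.le) ht.le, inv_rpow ha.le, ← rpow_neg ha.le, neg_sub]
    have hexp : -(2 * a * (a⁻¹ * t + 1 / (a⁻¹ * t))) / 2 = -t - a ^ 2 / t := by
      field_simp
      ring
    simp only [f]
    rw [hpow, hexp, mul_assoc]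
  have hsub := integral_comp_mul_left_Ioi f 0 (inv_pos.mpr ha)
  rw [setIntegral_congr_fun measurableSet_Ioi hf, integral_const_mul, mul_zero, inv_inv,
    smul_eq_mul, sub_eq_add_neg, rpow_add ha, rpow_one, mul_assoc] at hsub
  have hint : ∫ u in Ioi (0 : ℝ), f u = a ^ (-ν) * extendedGamma ν (a ^ 2) :=
    (mul_left_cancel₀ ha.ne' hsub).symm
  rw [besselK, hint]
  ring

lemma besselR_two_mul (ν : ℝ) {a : ℝ} (ha : 0 < a) :
    besselR ν (2 * a) =
      a⁻¹ * (extendedGamma (ν + 1) (a ^ 2) / extendedGamma ν (a ^ 2)) := by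
  have hpow : a ^ (-(ν + 1)) = a⁻¹ * a ^ (-ν) := by
    rw [neg_add, rpow_add ha, rpow_neg_one, mul_comm]
  have hpos : a ^ (-ν) / 2 ≠ 0 := (div_pos (rpow_pos_of_pos ha _) two_pos).ne'
  rw [besselR, besselK_two_mul _ ha, besselK_two_mul _ ha, hpow, mul_div_assoc a⁻¹, mul_assoc,
    mul_div_assoc, mul_div_mul_left _ _ hpos]

lemma rpow_le_rpow_add_rpow {t a b ν : ℝ} (ht : 0 < t) (ha : a ≤ ν) (hb : ν ≤ b) :
    t ^ ν ≤ t ^ a + t ^ b := by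
  rcases le_total t 1 with h1 | h1
  · exact (rpow_le_rpow_of_exponent_ge ht h1 ha).trans
      (le_add_of_nonneg_right (rpow_nonneg ht.le _))
  · exact (rpow_le_rpow_of_exponent_le h1 hb).trans
      (le_add_of_nonneg_left (rpow_nonneg ht.le _))

lemma tendsto_extendedGamma {ι : Type*} {l : Filter ι} [l.IsCountablyGenerated]
    {ν c : ι → ℝ} {ν₀ : ℝ} (hν₀ : 0 < ν₀) (hν : Tendsto ν l (𝓝 ν₀))
    (hc : Tendsto c l (𝓝 0)) (hc0 : ∀ᶠ i in l, 0 ≤ c i) :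
    Tendsto (fun i => extendedGamma (ν i) (c i)) l (𝓝 (Gamma ν₀)) := by
  rw [← extendedGamma_zero hν₀]
  have hν_near : ∀ᶠ i in l, ν i ∈ Ioo (ν₀ / 2) (3 * ν₀ / 2) :=
    hν (Ioo_mem_nhds (by linarith) (by linarith))
  -- For `ν ∈ (ν₀/2, 3ν₀/2)` and `c ≥ 0` the integrand is dominated by two gamma integrands.
  refine tendsto_integral_filter_of_dominated_convergence
    (fun t => exp (-t) * t ^ (ν₀ / 2 - 1) + exp (-t) * t ^ (3 * ν₀ / 2 - 1)) ?_ ?_ ?_ ?_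
  · refine Eventually.of_forall fun i => ContinuousOn.aestronglyMeasurable ?_ measurableSet_Ioi
    exact (continuousOn_id.rpow_const fun t ht => Or.inl (ne_of_gt ht)).mul
      (continuousOn_id.neg.sub (continuousOn_const.div continuousOn_id
        fun t ht => ne_of_gt ht)).rexp
  · filter_upwards [hν_near, hc0] with i hνi hci
    filter_upwards [ae_restrict_mem measurableSet_Ioi] with t (ht : 0 < t)
    have hexp : exp (-t - c i / t) ≤ exp (-t) :=
      exp_le_exp.mpr (by linarith [div_nonneg hci ht.le])
    have hpow := rpow_le_rpow_add_rpow ht (by linarith [hνi.1] : ν₀ / 2 - 1 ≤ ν i - 1)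
      (by linarith [hνi.2] : ν i - 1 ≤ 3 * ν₀ / 2 - 1)
    rw [norm_of_nonneg (by positivity)]
    calc t ^ (ν i - 1) * exp (-t - c i / t)
        ≤ (t ^ (ν₀ / 2 - 1) + t ^ (3 * ν₀ / 2 - 1)) * exp (-t) :=
          mul_le_mul hpow hexp (exp_pos _).le (by positivity)
      _ = _ := by ring
  · exact (GammaIntegral_convergent (by linarith)).add (GammaIntegral_convergent (by linarith))
  · filter_upwards [ae_restrict_mem measurableSet_Ioi] with t (ht : 0 < t)
    exact (tendsto_const_nhds.rpow (hν.sub_const 1) (Or.inl ht.ne')).mul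
      (tendsto_const_nhds.sub (hc.div_const t)).rexp

lemma sqrt_div_mul_inv_sqrt_mul {ω φ : ℝ} (hω : 0 < ω) (hφ : 0 < φ) :
    √(φ / ω) * (√(ω * φ))⁻¹ = ω⁻¹ := by
  rw [← sqrt_inv, ← sqrt_mul (by positivity)]
  have h : φ / ω * (ω * φ)⁻¹ = ω⁻¹ ^ 2 := by
    field_simp
  rw [h, sqrt_sq (by positivity)]

lemma tendsto_sqrt_div_mul_besselR {ι : Type*} {l : Filter ι} [l.IsCountablyGenerated]
    {ν φ : ι → ℝ} {ν₀ ω : ℝ} (hω : 0 < ω) (hν₀ : 0 < ν₀) (hν : Tendsto ν l (𝓝 ν₀))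
    (hφ : Tendsto φ l (𝓝 0)) (hφ0 : ∀ᶠ i in l, 0 < φ i) :
    Tendsto (fun i => √(φ i / ω) * besselR (ν i) (2 * √(ω * φ i))) l (𝓝 (ν₀ / ω)) := by
  have hc : Tendsto (fun i => ω * φ i) l (𝓝 0) := by simpa using hφ.const_mul ω
  have hc0 : ∀ᶠ i in l, 0 ≤ ω * φ i := hφ0.mono fun i hi => by positivity
  have hratio := (tendsto_extendedGamma (by linarith) (hν.add_const 1) hc hc0).div
    (tendsto_extendedGamma hν₀ hν hc hc0) (Gamma_pos_of_pos hν₀).ne'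
  have hlimit : ω⁻¹ * (Gamma (ν₀ + 1) / Gamma ν₀) = ν₀ / ω := by
    rw [Gamma_add_one hν₀.ne', mul_div_assoc, div_self (Gamma_pos_of_pos hν₀).ne']
    ring
  rw [← hlimit]
  refine (hratio.const_mul ω⁻¹).congr' ?_
  filter_upwards [hφ0] with i hi
  have ha : 0 < √(ω * φ i) := sqrt_pos.mpr (by positivity)
  rw [Pi.div_apply, besselR_two_mul _ ha, sq_sqrt (by positivity), ← mul_assoc,
    sqrt_div_mul_inv_sqrt_mul hω hi]

lemma add_div_inv_add_eq_credibility_mix {α β K S : ℝ} (hβ : 0 < β) (hK : 0 < K)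
    (hS : 0 < S) :
    (α + K) / (1 / β + S) =
      (1 - K * β / (K / S + K * β)) * (α * β) + (K * β / (K / S + K * β)) * (K / S) := by
  have hden : 0 < K / S + K * β := by positivity
  field_simp
  ring

/-- **Theorem 4d: non-informative experts.**
As `ξ → 0⁺`, the posterior mean of the Pareto tail index converges to `(α₀+K)/ω`, which is
the credibility mixture of the prior mean `α₀β₀` and the maximum likelihood estimator
`g = K / Σ log(x_k/L)`. -/
theorem pareto_posterior_mean_tendsto_of_noninformative_experts
    (α₀ β₀ L θbar : ℝ) (hα₀ : 0 < α₀) (hβ₀ : 0 < β₀) (hL : 0 < L) (hθbar : 0 < θbar)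
    (K M : ℕ) (hK : 1 ≤ K) (hM : 1 ≤ M) (x : Fin K → ℝ) (hx : ∀ k, L < x k)
    (ω g : ℝ) (hω : ω = 1 / β₀ + ∑ k, Real.log (x k / L))
    (hg : g = K / ∑ k, Real.log (x k / L)) :
    Tendsto (fun ξ : ℝ =>
        Real.sqrt (ξ * M * θbar / ω) *
          besselR (α₀ - M * ξ + K) (2 * Real.sqrt (ω * (ξ * M * θbar))))
      (nhdsWithin 0 (Set.Ioi 0)) (nhds ((α₀ + K) / ω)) ∧
    (α₀ + K) / ω =
      (1 - K * β₀ / (g + K * β₀)) * (α₀ * β₀) + (K * β₀ / (g + K * β₀)) * g := by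
  have hKpos : (0 : ℝ) < K := by exact_mod_cast hK
  have hMpos : (0 : ℝ) < M := by exact_mod_cast hM
  have hS : 0 < ∑ k, log (x k / L) :=
    haveI : Nonempty (Fin K) := ⟨⟨0, hK⟩⟩
    Finset.sum_pos (fun k _ => log_pos ((one_lt_div hL).mpr (hx k))) Finset.univ_nonempty
  have hωpos : 0 < ω := by rw [hω]; positivity
  refine ⟨tendsto_sqrt_div_mul_besselR hωpos (by positivity) ?_ ?_ ?_, ?_⟩
  · exact tendsto_nhdsWithin_of_tendsto_nhds
      (Continuous.tendsto' (by fun_prop) 0 _ (by simp))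
  · exact tendsto_nhdsWithin_of_tendsto_nhds
      (Continuous.tendsto' (by fun_prop) 0 _ (by simp))
  · exact eventually_nhdsWithin_of_forall fun ξ (hξ : 0 < ξ) => by positivity
  · rw [hω, hg]
    exact add_div_inv_add_eq_credibility_mix hβ₀ hKpos hS
end
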